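/- A weighted directed graph in which every directed cycle has nonpositive total weight, whose node set is finite, admits for every target node σ a well-defined 'longest path weight' function d : V_σ → ℤ on the set V_σ of nodes having a directed path to σ, satisfying d(σ) = 0 and d(v) = max over edges (v,w) with w ∈ V_σ ∪ {σ} of (weight(v,w) + d(w)) when v ≠ σ; moreover for every edge (u,v) with u,v ∈ V_σ, d(u) ≥ weight(u,v) + d(v). -/
import Mathlib


/-- A directed walk in a graph with edge relation `E`. -/
inductive Walk {V : Type*} (E : V → V → Prop) : V → V → Type _
  | nil (v : V) : Walk E v v
  | cons {u v x : V} : E u v → Walk E v x → Walk E u x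

namespace Walk

variable {V : Type*} {E : V → V → Prop}

/-- The total weight of a walk, for edge weights `w`. -/
def weight (w : V → V → ℤ) : {u v : V} → Walk E u v → ℤ
  | _, _, nil _ => 0
  | _, _, @cons _ _ u v _ _ p => w u v + weight w p

/-- All vertices of the walk lie in the set `S`. -/
def InSet (S : Set V) : {u v : V} → Walk E u v → Prop
  | _, _, nil v => v ∈ S
  | _, _, @cons _ _ u _ _ _ p => u ∈ S ∧ InSet S p

def length : {u v : V} → Walk E u v → ℕ
  | _, _, nil _ => 0
  | _, _, cons _ p => length p + 1

def support : {u v : V} → Walk E u v → List V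
  | _, _, nil v => [v]
  | _, _, @cons _ _ u _ _ _ p => u :: support p

lemma support_length {u v : V} (p : Walk E u v) : p.support.length = p.length + 1 := by
  induction p with
  | nil => rfl
  | cons e p ih => simp [support, length, ih]

lemma split (w : V → V → ℤ) {u v x : V} (p : Walk E u v) (hx : x ∈ p.support) :
    ∃ (q : Walk E u x) (r : Walk E x v),
      q.weight w + r.weight w = p.weight w ∧ q.length + r.length = p.length := by
  induction p with
  | nil a =>
      simp only [support, List.mem_singleton] at hx
      subst hx
      exact ⟨nil _, nil _, by simp [weight, length]⟩
  | @cons a b c e p ih =>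
      rcases List.mem_cons.1 hx with h | h
      · subst h
        exact ⟨nil _, cons e p, by simp [weight, length]⟩
      · obtain ⟨q, r, hw, hl⟩ := ih h
        refine ⟨cons e q, r, ?_, ?_⟩
        · simp only [weight]; linarith
        · simp only [length]; omega

lemma shorten (w : V → V → ℤ) (hcyc : ∀ (v : V) (p : Walk E v v), p.weight w ≤ 0)
    {u v : V} (p : Walk E u v) (hnd : ¬ p.support.Nodup) :
    ∃ p' : Walk E u v, p'.length < p.length ∧ p.weight w ≤ p'.weight w := by
  induction p with
  | nil a => simp [support] at hnd
  | @cons a b c e p ih =>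
      by_cases ha : a ∈ p.support
      · obtain ⟨q, r, hw, hl⟩ := split w p ha
        have hc : (cons e q).weight w ≤ 0 := hcyc a (cons e q)
        refine ⟨r, ?_, ?_⟩
        · simp only [length]; omega
        · simp only [weight] at hc ⊢; linarith
      · have h2 : ¬ p.support.Nodup := by
          simp only [support, List.nodup_cons] at hnd; tauto
        obtain ⟨p', hl, hw⟩ := ih h2
        refine ⟨cons e p', ?_, ?_⟩
        · simp only [length]; omega
        · simp only [weight]; linarith

lemma weight_le_length_mul (w : V → V → ℤ) (M : ℤ) (hM0 : 0 ≤ M)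
    (hM : ∀ a b : V, w a b ≤ M) {u v : V} (p : Walk E u v) :
    p.weight w ≤ (p.length : ℤ) * M := by
  induction p with
  | nil => simp [weight, length]
  | @cons a b c e p ih =>
      simp only [weight, length]
      push_cast
      have := hM a b
      nlinarith

lemma weight_bound [Fintype V] (w : V → V → ℤ)
    (hcyc : ∀ (v : V) (p : Walk E v v), p.weight w ≤ 0) (M : ℤ) (hM0 : 0 ≤ M)
    (hM : ∀ a b : V, w a b ≤ M) :
    ∀ (n : ℕ) {u v : V} (p : Walk E u v), p.length ≤ n →
      p.weight w ≤ (Fintype.card V : ℤ) * M := by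
  intro n
  induction n with
  | zero =>
      intro u v p hl
      have h1 := weight_le_length_mul w M hM0 hM p
      have h2 : p.length = 0 := Nat.le_zero.1 hl
      have h3 : (0:ℤ) ≤ (Fintype.card V : ℤ) * M := by positivity
      rw [h2] at h1; push_cast at h1; linarith
  | succ n ih =>
      intro u v p hl
      by_cases hnd : p.support.Nodup
      · have h1 : p.support.length ≤ Fintype.card V := hnd.length_le_card
        have h2 : (p.length : ℤ) ≤ (Fintype.card V : ℤ) := by
          have := support_length p; omega
        calc p.weight w ≤ (p.length : ℤ) * M := weight_le_length_mul w M hM0 hM p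
          _ ≤ (Fintype.card V : ℤ) * M := by nlinarith
      · obtain ⟨p', hl', hw⟩ := shorten w hcyc p hnd
        exact hw.trans (ih p' (by omega))

end Walk

/-- a finite weighted directed graph in which every directed
cycle has nonpositive total weight admits, for every target node `σ`, a
well-defined longest-path-weight function `d` on the set
`V_σ = {v | Nonempty (Walk E v σ)}` of nodes having a directed path to `σ`:
`d σ = 0`; for each `v ∈ V_σ`, `d v` is the (attained) maximum weight of
walks from `v` to `σ`; for `v ≠ σ` it is the maximum over outgoing edges
into `V_σ` of `w(v,u) + d u`; and for every edge `(u,v)` inside `V_σ`,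
`d u ≥ w(u,v) + d v`. -/
theorem longest_path_weight_exists
    {V : Type*} [Fintype V] (E : V → V → Prop) (w : V → V → ℤ)
    (hcyc : ∀ (v : V) (p : Walk E v v), p.weight w ≤ 0) (σ : V) :
    ∃ d : V → ℤ,
      d σ = 0 ∧
      (∀ v, Nonempty (Walk E v σ) →
        IsGreatest {x : ℤ | ∃ p : Walk E v σ, p.weight w = x} (d v)) ∧
      (∀ v, Nonempty (Walk E v σ) → v ≠ σ →
        (∃ u, E v u ∧ Nonempty (Walk E u σ) ∧ d v = w v u + d u) ∧
        (∀ u, E v u → Nonempty (Walk E u σ) → w v u + d u ≤ d v)) ∧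
      (∀ u v, E u v → Nonempty (Walk E u σ) → Nonempty (Walk E v σ) →
        d u ≥ w u v + d v) := by
  classical
  have hne : Nonempty V := ⟨σ⟩
  set M : ℤ := max 0 ((Finset.univ : Finset (V × V)).sup' Finset.univ_nonempty (fun p : V × V => w p.1 p.2)) with hMdef
  have hM0 : 0 ≤ M := le_max_left _ _
  have hM : ∀ a b : V, w a b ≤ M := by
    intro a b
    refine le_trans ?_ (le_max_right _ _)
    exact Finset.le_sup' (fun p : V × V => w p.1 p.2) (Finset.mem_univ (a, b))
  set B : ℤ := (Fintype.card V : ℤ) * M with hBdef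
  have hbound : ∀ {v : V} (p : Walk E v σ), p.weight w ≤ B := by
    intro v p
    exact Walk.weight_bound w hcyc M hM0 hM p.length p le_rfl
  -- for each v with a walk, a greatest element exists
  have hgr : ∀ v : V, Nonempty (Walk E v σ) →
      ∃ m : ℤ, IsGreatest {x : ℤ | ∃ p : Walk E v σ, p.weight w = x} m := by
    intro v ⟨p⟩
    obtain ⟨m, hm, hub⟩ := Int.exists_greatest_of_bdd
      (P := fun x => ∃ p : Walk E v σ, p.weight w = x)
      ⟨B, fun z ⟨q, hq⟩ => hq ▸ hbound q⟩ ⟨p.weight w, p, rfl⟩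
    exact ⟨m, hm, fun x hx => hub x hx⟩
  set d : V → ℤ := fun v =>
    if h : Nonempty (Walk E v σ) then Classical.choose (hgr v h) else 0 with hddef
  have hd : ∀ v (h : Nonempty (Walk E v σ)),
      IsGreatest {x : ℤ | ∃ p : Walk E v σ, p.weight w = x} (d v) := by
    intro v h
    have hdv : d v = Classical.choose (hgr v h) := dif_pos h
    rw [hdv]
    exact Classical.choose_spec (hgr v h)
  have hσ : d σ = 0 := by
    have h0 : IsGreatest {x : ℤ | ∃ p : Walk E σ σ, p.weight w = x} 0 :=
      ⟨⟨Walk.nil σ, rfl⟩, fun x ⟨q, hq⟩ => hq ▸ hcyc σ q⟩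
    exact (hd σ ⟨Walk.nil σ⟩).unique h0
  refine ⟨d, hσ, hd, ?_, ?_⟩
  · intro v hv hvσ
    obtain ⟨p, hp⟩ := (hd v hv).1
    constructor
    · cases p with
      | nil => exact absurd rfl hvσ
      | @cons _ u _ e q =>
          refine ⟨u, e, ⟨q⟩, ?_⟩
          have h1 : q.weight w ≤ d u := (hd u ⟨q⟩).2 ⟨q, rfl⟩
          obtain ⟨q', hq'⟩ := (hd u ⟨q⟩).1
          have h2 : w v u + d u ≤ d v := (hd v hv).2 ⟨Walk.cons e q', by rw [Walk.weight, hq']⟩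
          have hp' : w v u + q.weight w = d v := hp
          linarith
    · intro u e hu
      obtain ⟨q', hq'⟩ := (hd u hu).1
      exact (hd v hv).2 ⟨Walk.cons e q', by rw [Walk.weight, hq']⟩
  · intro u v e hu hv
    obtain ⟨q', hq'⟩ := (hd v hv).1
    exact (hd u hu).2 ⟨Walk.cons e q', by rw [Walk.weight, hq']⟩
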